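/- For all integers 1 ≤ j ≤ k, H(k,j) = −H(k,j−1) + (−1)^k G(k−1,j−1) + 𝔾_{k−1}. -/

import Mathlib

open Filter Finset Real

/-- Genocchi numbers `G_n := 2(1 − 2ⁿ)Bₙ`, with Bernoulli numbers `B_1 = -1/2`. -/
def Gnum (n : ℕ) : ℚ := 2 * (1 - 2 ^ n) * bernoulli n

/-- `𝔾_n := (−1)^{⌊n/2⌋} G_n`. -/
def GGnum (n : ℕ) : ℚ := (-1) ^ (n / 2) * Gnum n

/-- `G(k,j) := (−1)^{⌊(k−1)/2⌋} ∑_{n=1}^{j} binom(j,n) G_{k−n}` (floor over ℤ). -/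
def Gcal (k j : ℕ) : ℚ :=
  (-1 : ℚ) ^ (Int.fdiv ((k : ℤ) - 1) 2) *
    ∑ n ∈ Finset.Icc 1 j, (j.choose n : ℚ) * Gnum (k - n)

/-- `h(j,n) := ∑_{u=n}^{j} (−1)^{j−u} binom(u−1, n−1)`. -/
def hnum (j n : ℕ) : ℤ :=
  ∑ u ∈ Finset.Icc n j, (-1 : ℤ) ^ (j - u) * ((u - 1).choose (n - 1))

/-- `H(k,j) := (−1)^{⌊(k−1)/2⌋} ∑_{n=1}^{j} h(j,n) G_{k−n}` (floor over ℤ). -/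
def Hcal (k j : ℕ) : ℚ :=
  (-1 : ℚ) ^ (Int.fdiv ((k : ℤ) - 1) 2) *
    ∑ n ∈ Finset.Icc 1 j, (hnum j n : ℚ) * Gnum (k - n)

/-! The weights obey the Pascal-type rule `h(j+1,n) + h(j,n) = binom(j,n-1)`: the sum defining
`h(j+1,n)` is the sign-flipped sum defining `h(j,n)` plus its top term `u = j+1`. Summed against
`G_{k-n}`, this turns `H(k,j) + H(k,j-1)` into `∑_{n=1}^{j} binom(j-1,n-1) G_{k-n}`, whose term
`n = 1` gives `𝔾_{k-1}` and whose shift `n ↦ n+1` gives `G(k-1,j-1)`. The signs agree because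
`(-1)^⌊(k-1)/2⌋ = (-1)^k (-1)^⌊(k-2)/2⌋`. -/

theorem hnum_of_lt {j n : ℕ} (h : j < n) : hnum j n = 0 := by
  simp [hnum, Icc_eq_empty_of_lt h]

theorem hnum_succ_add_hnum {j n : ℕ} (hn : n ≤ j + 1) :
    hnum (j + 1) n + hnum j n = j.choose (n - 1) := by
  have hsign : ∀ u ∈ Icc n j, (-1 : ℤ) ^ (j + 1 - u) = -(-1) ^ (j - u) := fun u hu => by
    rw [Nat.sub_add_comm (mem_Icc.1 hu).2, pow_succ, mul_neg_one]
  simp only [hnum, sum_Icc_succ_top hn, Nat.sub_self, pow_zero, one_mul, Nat.add_sub_cancel]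
  rw [sum_congr rfl fun u hu => by rw [hsign u hu], add_right_comm, ← sum_add_distrib]
  simp

theorem sum_hnum_succ_add_sum_hnum {R : Type*} [Ring R] (j : ℕ) (f : ℕ → R) :
    ∑ n ∈ Icc 1 (j + 1), (hnum (j + 1) n : R) * f n + ∑ n ∈ Icc 1 j, (hnum j n : R) * f n =
      f 1 + ∑ n ∈ Icc 1 j, (j.choose n : R) * f (n + 1) := by
  have hext : ∑ n ∈ Icc 1 j, (hnum j n : R) * f n =
      ∑ n ∈ Icc 1 (j + 1), (hnum j n : R) * f n := by
    simp [sum_Icc_succ_top, hnum_of_lt]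
  have hpascal : ∀ n ∈ Icc 1 (j + 1),
      (hnum (j + 1) n : R) * f n + (hnum j n : R) * f n = (j.choose (n - 1) : R) * f n :=
    fun n hn => by
      rw [← add_mul, ← Int.cast_add, hnum_succ_add_hnum (mem_Icc.1 hn).2, Int.cast_natCast]
  have hshift := sum_Ico_add' (fun n => (j.choose (n - 1) : R) * f n) 0 (j + 1) 1
  simp only [zero_add, Nat.add_sub_cancel, Ico_add_one_right_eq_Icc] at hshift
  rw [hext, ← sum_add_distrib, sum_congr rfl hpascal, ← hshift,
    ← add_sum_Ioc_eq_sum_Icc j.zero_le, ← Icc_add_one_left_eq_Ioc]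
  simp

section Sign

variable {R : Type*} [DivisionRing R]

theorem neg_one_zpow_fdiv_two (z : ℤ) :
    (-1 : R) ^ z.fdiv 2 = (-1) ^ (z + 1) * (-1) ^ (z - 1).fdiv 2 := by
  simp only [Int.fdiv_eq_ediv_of_nonneg _ zero_le_two]
  obtain ⟨t, rfl | rfl⟩ := Int.even_or_odd' z
  · rw [show 2 * t / 2 = (2 * t - 1) / 2 + 1 by omega, zpow_add_one₀ (by norm_num),
      (odd_two_mul_add_one t).neg_one_zpow]
    simp
  · rw [show (2 * t + 1) / 2 = (2 * t + 1 - 1) / 2 by omega,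
      show 2 * t + 1 + 1 = 2 * (t + 1) by ring, (even_two_mul _).neg_one_zpow, one_mul]

theorem neg_one_zpow_natCast_fdiv_two (n : ℕ) :
    (-1 : R) ^ (n : ℤ).fdiv 2 = (-1) ^ (n / 2) := by
  rw [Int.fdiv_eq_ediv_of_nonneg _ zero_le_two, ← zpow_natCast]
  norm_cast

end Sign

/-- For all integers `1 ≤ j ≤ k`,
`H(k,j) = −H(k,j−1) + (−1)^k G(k−1,j−1) + 𝔾_{k−1}`. -/
theorem Hcal_Gcal_recurrence (k j : ℕ) (hj : 1 ≤ j) (hjk : j ≤ k) :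
    Hcal k j =
      -Hcal k (j - 1) + (-1 : ℚ) ^ k * Gcal (k - 1) (j - 1) + GGnum (k - 1) := by
  obtain ⟨k, rfl⟩ : ∃ k', k = k' + 1 := ⟨k - 1, by omega⟩
  obtain ⟨j, rfl⟩ : ∃ j', j = j' + 1 := ⟨j - 1, by omega⟩
  have hsum := sum_hnum_succ_add_sum_hnum j fun n => Gnum (k + 1 - n)
  simp only [Nat.add_sub_cancel, Nat.add_sub_add_right] at hsum ⊢
  simp only [Hcal, Gcal, GGnum, ← neg_one_zpow_natCast_fdiv_two, Nat.cast_add_one,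
    add_sub_cancel_right]
  rw [← zpow_natCast, Nat.cast_add_one, ← mul_assoc, ← neg_one_zpow_fdiv_two]
  linear_combination (-1 : ℚ) ^ (k : ℤ).fdiv 2 * hsum
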